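/- arXiv:2401.06869 — 2 statements merged into one kernel-verified Lean document; each statement's English description precedes it below -/
import Mathlib

section
/- Let M be a matroid on E and S ⊆ E with S containing no broken circuit. If e ∈ E satisfies P(M) ∩ H⁺_{e,S} ≠ ∅ for every e, then in fact P(M) ∩ ⋂_{e∈E} H⁺_{e,S} ≠ ∅; i.e., the pairwise nonemptiness of the intersections with each half-space implies nonemptiness of the intersection with all half-spaces simultaneously. -/
open Matroid Set

/-- The indicator vector of a subset `B ⊆ E`, as a point of `ℝ^E`. -/
noncomputable def indVec {α : Type*} (B : Set α) : α → ℝ := B.indicator 1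

/-- The base polytope of a matroid: the convex hull of the indicator vectors of bases. -/
noncomputable def basePolytope {α : Type*} (M : Matroid α) : Set (α → ℝ) :=
  convexHull ℝ {x | ∃ B, M.IsBase B ∧ x = indVec B}

/-- `C` is a circuit of `M`: a minimal dependent subset of the ground set. -/
def IsCircuit {α : Type*} (M : Matroid α) (C : Set α) : Prop :=
  C ⊆ M.E ∧ ¬ M.Indep C ∧ ∀ D, D ⊂ C → M.Indep D

/-- `B` is a broken circuit of `M` w.r.t. a fixed linear order. -/
def IsBrokenCircuit {α : Type*} [LinearOrder α] (M : Matroid α) (B : Set α) : Prop :=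
  ∃ e, (∀ f ∈ B, e < f) ∧ _root_.IsCircuit M (insert e B)

/-- `S` contains no broken circuit of `M`. -/
def NoBrokenCircuit {α : Type*} [LinearOrder α] (M : Matroid α) (S : Set α) : Prop :=
  ∀ B ⊆ S, ¬ IsBrokenCircuit M B

/-- The open half-space `H⁺_{e,S} = { v : Σ_{f ∈ S_e ∪ {e}} v_f > |S_e| }`,
where `S_e = {s ∈ S : s > e}`. -/
def halfSpace {α : Type*} [LinearOrder α] [DecidableEq α] (S : Finset α) (e : α) :
    Set (α → ℝ) :=
  {v | ((S.filter (fun s => e < s)).card : ℝ) < ∑ f ∈ insert e (S.filter (fun s => e < s)), v f}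

lemma indVec_mem {α : Type*} {B : Set α} {f : α} (h : f ∈ B) : indVec B f = 1 := by
  simp [indVec, Set.indicator_of_mem h]

lemma indVec_nonneg {α : Type*} (B : Set α) (f : α) : 0 ≤ indVec B f := by
  unfold indVec; by_cases h : f ∈ B <;> simp [Set.indicator_of_mem, Set.indicator_of_notMem, h]

lemma indVec_le_one {α : Type*} (B : Set α) (f : α) : indVec B f ≤ 1 := by
  unfold indVec; by_cases h : f ∈ B <;> simp [Set.indicator_of_mem, Set.indicator_of_notMem, h]

lemma sum_indVec_of_subset {α : Type*} (T : Finset α) (B : Set α) (h : ↑T ⊆ B) :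
    ∑ f ∈ T, indVec B f = (T.card : ℝ) := by
  rw [Finset.sum_congr rfl (fun f hf => indVec_mem (h hf))]
  simp

lemma extract {α : Type*} [LinearOrder α] [DecidableEq α] (M : Matroid α) (S : Finset α) (e : α)
    (h : (basePolytope M ∩ halfSpace S e).Nonempty) :
    ∃ B, M.IsBase B ∧ ↑(insert e (S.filter (fun s => e < s))) ⊆ B := by
  by_contra hcon
  push_neg at hcon
  obtain ⟨v, hvP, hvH⟩ := h
  set T := insert e (S.filter (fun s => e < s)) with hT
  have heT : e ∉ S.filter (fun s => e < s) := by simp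
  have hcardT : (T.card : ℝ) = (S.filter (fun s => e < s)).card + 1 := by
    rw [hT, Finset.card_insert_of_notMem heT]; push_cast; ring
  have hlin : IsLinearMap ℝ (fun w : α → ℝ => ∑ f ∈ T, w f) :=
    ⟨fun x y => by simp [Finset.sum_add_distrib], fun c x => by simp [Finset.mul_sum]⟩
  have hconv : Convex ℝ {w : α → ℝ | ∑ f ∈ T, w f ≤ (T.card : ℝ) - 1} :=
    convex_halfSpace_le hlin _
  have hsub : {x | ∃ B, M.IsBase B ∧ x = indVec B} ⊆
      {w : α → ℝ | ∑ f ∈ T, w f ≤ (T.card : ℝ) - 1} := by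
    rintro x ⟨B, hB, rfl⟩
    obtain ⟨f0, hf0T, hf0B⟩ := not_subset.mp (hcon B hB)
    have hf0T' : f0 ∈ T := hf0T
    have : ∑ f ∈ T, indVec B f = ∑ f ∈ T.erase f0, indVec B f + indVec B f0 :=
      (Finset.sum_erase_add T _ hf0T').symm
    rw [Set.mem_setOf_eq, this, indVec, Set.indicator_of_notMem hf0B, add_zero]
    calc ∑ f ∈ T.erase f0, indVec B f ≤ ∑ _f ∈ T.erase f0, (1:ℝ) :=
          Finset.sum_le_sum (fun f _ => indVec_le_one B f)
      _ = ((T.erase f0).card : ℝ) := by simp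
      _ = (T.card : ℝ) - 1 := by
          rw [Finset.card_erase_of_mem hf0T']
          have : 1 ≤ T.card := Finset.card_pos.mpr ⟨f0, hf0T'⟩
          push_cast [this]; ring
  have hv := convexHull_min hsub hconv hvP
  rw [Set.mem_setOf_eq] at hv
  have : ((S.filter (fun s => e < s)).card : ℝ) < (T.card : ℝ) - 1 := lt_of_lt_of_le hvH hv
  rw [hcardT] at this
  linarith

lemma weight_bound {α : Type*} [Fintype α] [LinearOrder α] [DecidableEq α] (e : α) :
    (Fintype.card α : ℝ) *
      ∑ e' ∈ Finset.univ.filter (fun x => e < x),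
        ((Fintype.card α : ℝ) + 1) ^ ((Finset.univ.filter (fun y => e' < y)).card) <
    ((Fintype.card α : ℝ) + 1) ^ ((Finset.univ.filter (fun y => e < y)).card) := by
  set n := Fintype.card α
  set m : α → ℕ := fun x => (Finset.univ.filter (fun y => x < y)).card with hm
  have hanti : ∀ a b : α, a < b → m b < m a := by
    intro a b hab
    apply Finset.card_lt_card
    constructor
    · intro y hy
      simp only [Finset.mem_filter, Finset.mem_univ, true_and] at hy ⊢
      exact hab.trans hy
    · intro hsub
      have : b ∈ Finset.univ.filter (fun y => a < y) := by simp [hab]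
      have := hsub this
      simp at this
  have hx0 : (0:ℝ) ≤ (n:ℝ) + 1 := by positivity
  have hinj : ∀ a ∈ Finset.univ.filter (fun x => e < x),
      ∀ b ∈ Finset.univ.filter (fun x => e < x), m a = m b → a = b := by
    intro a _ b _ hab
    rcases lt_trichotomy a b with hab' | hab' | hab'
    · exact absurd hab (hanti a b hab').ne'
    · exact hab'
    · exact absurd hab (hanti b a hab').ne
  have himg : (Finset.univ.filter (fun x => e < x)).image m ⊆ Finset.range (m e) := by
    intro j hj
    obtain ⟨a, ha, rfl⟩ := Finset.mem_image.mp hj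
    simp only [Finset.mem_filter, Finset.mem_univ, true_and] at ha
    exact Finset.mem_range.mpr (hanti e a ha)
  have h1 : ∑ e' ∈ Finset.univ.filter (fun x => e < x), ((n:ℝ)+1) ^ (m e')
      = ∑ j ∈ (Finset.univ.filter (fun x => e < x)).image m, ((n:ℝ)+1) ^ j :=
    (Finset.sum_image hinj).symm
  have h2 : ∑ j ∈ (Finset.univ.filter (fun x => e < x)).image m, ((n:ℝ)+1) ^ j
      ≤ ∑ j ∈ Finset.range (m e), ((n:ℝ)+1) ^ j :=
    Finset.sum_le_sum_of_subset_of_nonneg himg (fun j _ _ => by positivity)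
  have h3 : (n:ℝ) * ∑ j ∈ Finset.range (m e), ((n:ℝ)+1) ^ j = ((n:ℝ)+1) ^ (m e) - 1 := by
    have := geom_sum_mul ((n:ℝ)+1) (m e)
    linarith [this]
  calc (n:ℝ) * ∑ e' ∈ Finset.univ.filter (fun x => e < x), ((n:ℝ)+1) ^ (m e')
      ≤ (n:ℝ) * ∑ j ∈ Finset.range (m e), ((n:ℝ)+1) ^ j := by
        rw [h1]; exact mul_le_mul_of_nonneg_left h2 (by positivity)
    _ = ((n:ℝ)+1) ^ (m e) - 1 := h3
    _ < ((n:ℝ)+1) ^ (m e) := by linarith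

/-- If `S` contains no broken circuit of `M` and `P(M)` meets each half-space `H⁺_{e,S}`,
then `P(M)` meets the intersection of all of them simultaneously. -/
theorem stmt_3 {α : Type*} [Fintype α] [LinearOrder α] [DecidableEq α]
    (M : Matroid α) (hE : M.E = univ) (S : Finset α)
    (hnbc : NoBrokenCircuit M ↑S)
    (h : ∀ e : α, (basePolytope M ∩ halfSpace S e).Nonempty) :
    (basePolytope M ∩ ⋂ e : α, halfSpace S e).Nonempty := by
  classical
  cases isEmpty_or_nonempty α with
  | inl hempty =>
    obtain ⟨B, hB⟩ := M.exists_isBase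
    exact ⟨indVec B, subset_convexHull ℝ _ ⟨B, hB, rfl⟩, by simp⟩
  | inr hne =>
    choose B hBbase hBsub using fun e => extract M S e (h e)
    set n := Fintype.card α with hn
    set m : α → ℕ := fun x => (Finset.univ.filter (fun y => x < y)).card with hm
    set lam : α → ℝ := fun x => ((n:ℝ)+1) ^ (m x) with hlam
    have hlampos : ∀ x, 0 < lam x := fun x => by positivity
    set W : ℝ := ∑ x, lam x with hW
    have hWpos : 0 < W := Finset.sum_pos (fun x _ => hlampos x) Finset.univ_nonempty
    set μ : α → ℝ := fun x => lam x / W with hμ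
    have hμpos : ∀ x, 0 < μ x := fun x => div_pos (hlampos x) hWpos
    have hμsum : ∑ x, μ x = 1 := by
      rw [hμ]; rw [← Finset.sum_div]; field_simp; exact hW.symm
    set v : α → ℝ := ∑ e, μ e • indVec (B e) with hv
    refine ⟨v, ?_, ?_⟩
    · exact (convex_convexHull ℝ _).sum_mem (fun i _ => (hμpos i).le) hμsum
        (fun i _ => subset_convexHull ℝ _ ⟨B i, hBbase i, rfl⟩)
    · rw [Set.mem_iInter]
      intro e
      set k := (S.filter (fun s => e < s)).card with hk
      set T := insert e (S.filter (fun s => e < s)) with hT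
      show (k:ℝ) < ∑ f ∈ T, v f
      set c : α → ℝ := fun e' => ∑ f ∈ T, indVec (B e') f with hc
      have hvsum : ∑ f ∈ T, v f = ∑ e', μ e' * c e' := by
        rw [hv]
        simp only [Finset.sum_apply, Pi.smul_apply, smul_eq_mul]
        rw [Finset.sum_comm]
        exact Finset.sum_congr rfl (fun e' _ => by rw [Finset.mul_sum])
      have hcnonneg : ∀ e', 0 ≤ c e' :=
        fun e' => Finset.sum_nonneg (fun f _ => indVec_nonneg _ f)
      have hcle : ∀ e', e' ≤ e → (k:ℝ) ≤ c e' := by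
        intro e' he'
        have hsub1 : S.filter (fun s => e < s) ⊆ T := Finset.subset_insert _ _
        have h1 : ∑ f ∈ S.filter (fun s => e < s), indVec (B e') f = (k:ℝ) := by
          rw [hk]
          apply sum_indVec_of_subset
          intro f hf
          simp only [Finset.coe_filter, Set.mem_setOf_eq] at hf
          apply hBsub e'
          simp only [Finset.coe_insert, Set.mem_insert_iff, Finset.mem_coe,
            Finset.mem_filter]
          exact Or.inr ⟨hf.1, lt_of_le_of_lt he' hf.2⟩
        rw [← h1]
        exact Finset.sum_le_sum_of_subset_of_nonneg hsub1
          (fun f _ _ => indVec_nonneg _ f)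
      have hce : (k:ℝ) + 1 ≤ c e := by
        have : c e = (T.card : ℝ) := sum_indVec_of_subset T (B e) (hBsub e)
        rw [this, hT, Finset.card_insert_of_notMem (by simp)]
        push_cast; simp [hk]
      -- split the sum
      have hsplit : ∑ e', μ e' * c e'
          = ∑ e' ∈ Finset.univ.filter (fun x => x ≤ e), μ e' * c e'
          + ∑ e' ∈ Finset.univ.filter (fun x => ¬ x ≤ e), μ e' * c e' :=
        (Finset.sum_filter_add_sum_filter_not _ _ _).symm
      have hpart2 : 0 ≤ ∑ e' ∈ Finset.univ.filter (fun x => ¬ x ≤ e), μ e' * c e' :=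
        Finset.sum_nonneg (fun e' _ => mul_nonneg (hμpos e').le (hcnonneg e'))
      have hpart1 : (k:ℝ) * (∑ e' ∈ Finset.univ.filter (fun x => x ≤ e), μ e') + μ e
          ≤ ∑ e' ∈ Finset.univ.filter (fun x => x ≤ e), μ e' * c e' := by
        have hdiff : μ e * 1 ≤ ∑ e' ∈ Finset.univ.filter (fun x => x ≤ e),
            μ e' * (c e' - k) := by
          have hmem : e ∈ Finset.univ.filter (fun x => x ≤ e) := by simp
          calc μ e * 1 ≤ μ e * (c e - k) := by
                have := hce; nlinarith [hμpos e]
            _ ≤ ∑ e' ∈ Finset.univ.filter (fun x => x ≤ e), μ e' * (c e' - k) := by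
                apply Finset.single_le_sum (f := fun e' => μ e' * (c e' - k)) ?_ hmem
                intro i hi
                simp only [Finset.mem_filter, Finset.mem_univ, true_and] at hi
                exact mul_nonneg (hμpos i).le (by linarith [hcle i hi])
        have hexp : ∑ e' ∈ Finset.univ.filter (fun x => x ≤ e), μ e' * (c e' - k)
            = ∑ e' ∈ Finset.univ.filter (fun x => x ≤ e), μ e' * c e'
            - (k:ℝ) * ∑ e' ∈ Finset.univ.filter (fun x => x ≤ e), μ e' := by
          rw [Finset.mul_sum, ← Finset.sum_sub_distrib]
          exact Finset.sum_congr rfl (fun i _ => by ring)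
        rw [hexp] at hdiff
        linarith
      -- weight inequality: μ e > k * (sum over > e of μ)
      have hAB : (∑ e' ∈ Finset.univ.filter (fun x => x ≤ e), μ e')
          + (∑ e' ∈ Finset.univ.filter (fun x => ¬ x ≤ e), μ e') = 1 := by
        rw [Finset.sum_filter_add_sum_filter_not]; exact hμsum
      have hkn : (k:ℝ) ≤ (n:ℝ) := by
        have : k ≤ n := le_trans (Finset.card_filter_le _ _) (Finset.card_le_univ S)
        exact_mod_cast this
      have hkey : (k:ℝ) * (∑ e' ∈ Finset.univ.filter (fun x => ¬ x ≤ e), μ e') < μ e := by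
        have hfeq : Finset.univ.filter (fun x : α => ¬ x ≤ e)
            = Finset.univ.filter (fun x => e < x) := by
          apply Finset.filter_congr; intro x _; simp [not_le]
        rw [hfeq]
        have hwb := weight_bound (α := α) e
        have hsum_nonneg : 0 ≤ ∑ e' ∈ Finset.univ.filter (fun x => e < x), lam e' :=
          Finset.sum_nonneg (fun e' _ => (hlampos e').le)
        have h1 : (k:ℝ) * ∑ e' ∈ Finset.univ.filter (fun x => e < x), lam e' < lam e := by
          calc (k:ℝ) * ∑ e' ∈ Finset.univ.filter (fun x => e < x), lam e'
              ≤ (n:ℝ) * ∑ e' ∈ Finset.univ.filter (fun x => e < x), lam e' :=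
                mul_le_mul_of_nonneg_right hkn hsum_nonneg
            _ < lam e := hwb
        have : ∑ e' ∈ Finset.univ.filter (fun x => e < x), μ e'
            = (∑ e' ∈ Finset.univ.filter (fun x => e < x), lam e') / W := by
          rw [hμ, Finset.sum_div]
        rw [this]
        show (k:ℝ) * ((∑ e' ∈ Finset.univ.filter (fun x => e < x), lam e') / W) < lam e / W
        rw [← mul_div_assoc]
        exact (div_lt_div_iff_of_pos_right hWpos).mpr h1
      rw [hvsum, hsplit]
      nlinarith [hpart1, hpart2, hAB, hkey,
        Finset.sum_nonneg (s := Finset.univ.filter (fun x : α => ¬ x ≤ e))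
          (f := μ) (fun i _ => (hμpos i).le)]
end

section
/- Let M and M' be matroids on E with every basis of M' a basis of M and rk(M) = rk(M'). Fix natural numbers k₁ < ⋯ < k_r. Then the map sending a chain of flats of M to the chain of their closures in M' restricts to a surjection from { chains F₁ ⊂ ⋯ ⊂ F_r of flats of M with rk_M(F_i) = k_i } onto { chains F'₁ ⊂ ⋯ ⊂ F'_r of flats of M' with rk_{M'}(F'_i) = k_i }, in the sense that every chain of flats of M' of ranks (k₁,…,k_r) arises as the chain of closures of a chain of flats of M of the same ranks. -/
open Matroid Set

/-- The rank of a set `S` in a matroid `M`: the maximal size of an independent subset. -/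
noncomputable def matRank {α : Type*} (M : Matroid α) (S : Set α) : ℕ :=
  sSup {n | ∃ I, M.Indep I ∧ I ⊆ S ∧ I.ncard = n}

lemma matRank_eq_of_basis {α : Type*} [Fintype α] {M : Matroid α} {I S : Set α}
    (hI : M.IsBasis I S) : matRank M S = I.ncard := by
  have hbound : ∀ n ∈ {n | ∃ J, M.Indep J ∧ J ⊆ S ∧ J.ncard = n}, n ≤ I.ncard := by
    rintro n ⟨J, hJ, hJS, rfl⟩
    obtain ⟨J', hJ', hJJ'⟩ := hJ.subset_isBasis_of_subset hJS hI.subset_ground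
    have h1 : J.ncard ≤ J'.ncard := Set.ncard_le_ncard hJJ' (Set.toFinite _)
    have h2 : J'.ncard = I.ncard := by
      have := hJ'.encard_eq_encard hI
      rw [Set.ncard_def, Set.ncard_def, this]
    omega
  refine le_antisymm (csSup_le ⟨I.ncard, I, hI.indep, hI.subset, rfl⟩ hbound) ?_
  exact le_csSup ⟨I.ncard, hbound⟩ ⟨I, hI.indep, hI.subset, rfl⟩

/-- A chain of nested bases can be found for a chain of nested sets, extending a
given independent set. -/
lemma exists_basis_chain {α : Type*} {M : Matroid α} :
    ∀ (r : ℕ) (X : Fin r → Set α), (∀ i j, i ≤ j → X i ⊆ X j) → (∀ i, X i ⊆ M.E) →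
    ∀ S : Set α, M.Indep S → (∀ i, S ⊆ X i) →
    ∃ I : Fin r → Set α, (∀ i j, i ≤ j → I i ⊆ I j) ∧ (∀ i, S ⊆ I i) ∧
      ∀ i, M.IsBasis (I i) (X i) := by
  intro r
  induction r with
  | zero => exact fun X _ _ S _ _ => ⟨Fin.elim0, fun i => i.elim0, fun i => i.elim0,
      fun i => i.elim0⟩
  | succ n ih =>
    intro X hXmono hXE S hS hSX
    obtain ⟨I0, hI0, hSI0⟩ := hS.subset_isBasis_of_subset (hSX 0) (hXE 0)
    obtain ⟨I, hImono, hI0I, hIbasis⟩ := ih (fun i => X i.succ)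
      (fun i j hij => hXmono _ _ (by simpa using hij)) (fun i => hXE _) I0 hI0.indep
      (fun i => hI0.subset.trans (hXmono 0 i.succ (Fin.zero_le _)))
    refine ⟨Fin.cons I0 I, ?_, ?_, ?_⟩
    · intro i j
      induction i using Fin.cases with
      | zero =>
        induction j using Fin.cases with
        | zero => intro _; simp
        | succ j' => intro _; simpa using hI0I j'
      | succ i' =>
        induction j using Fin.cases with
        | zero => intro h; rw [Fin.le_def] at h; exact absurd h (by simp)
        | succ j' => intro h; simpa using hImono i' j' (Fin.succ_le_succ_iff.mp h)
    · intro i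
      refine Fin.cases hSI0 (fun i' => hSI0.trans (hI0I i')) i
    · intro i
      refine Fin.cases hI0 (fun i' => hIbasis i') i

/-- Rank-preserving weak maps lift chains of flats: if every basis of `M'` is a basis of
`M` and `rk M = rk M'`, then every chain `F'₁ ⊂ ⋯ ⊂ F'_r` of flats of `M'` of ranks
`k₁ < ⋯ < k_r` is the chain of `M'`-closures of a chain `F₁ ⊂ ⋯ ⊂ F_r` of flats of `M`
of the same ranks. -/
theorem stmt_7 {α : Type*} [Fintype α] (M M' : Matroid α)
    (hME : M.E = univ) (hM'E : M'.E = univ)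
    (hrk : matRank M univ = matRank M' univ)
    (hweak : ∀ B, M'.IsBase B → M.IsBase B)
    (r : ℕ) (k : Fin r → ℕ) (hk : StrictMono k)
    (F' : Fin r → Set α)
    (hF'flat : ∀ i, M'.IsFlat (F' i))
    (hF'chain : StrictMono F')
    (hF'rk : ∀ i, matRank M' (F' i) = k i) :
    ∃ F : Fin r → Set α, (∀ i, M.IsFlat (F i)) ∧ StrictMono F ∧
      (∀ i, matRank M (F i) = k i) ∧ (∀ i, M'.closure (F i) = F' i) := by
  -- get a chain of M'-bases I i of F' i
  obtain ⟨I, hImono, -, hIbasis⟩ := exists_basis_chain r F'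
    (fun i j hij => (hF'chain.monotone hij : _)) (fun i => by rw [hM'E]; exact subset_univ _)
    ∅ M'.empty_indep (fun i => empty_subset _)
  -- every M'-independent set is M-independent
  have hindep : ∀ J, M'.Indep J → M.Indep J := by
    intro J hJ
    obtain ⟨B, hB, hJB⟩ := hJ.exists_isBase_superset
    exact (hweak B hB).indep.subset hJB
  -- M-closure is contained in M'-closure for M'-independent sets
  have hclsub : ∀ J, M'.Indep J → M.closure J ⊆ M'.closure J := by
    intro J hJ x hx
    by_contra hx'
    have hxJ : x ∉ J := fun h => hx' (M'.subset_closure J (by rw [hM'E]; exact subset_univ _) h)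
    have : M'.Indep (insert x J) := by
      rw [hJ.insert_indep_iff_of_notMem hxJ]
      exact ⟨by rw [hM'E]; exact mem_univ x, hx'⟩
    have hMind : M.Indep (insert x J) := hindep _ this
    have : x ∉ M.closure J := by
      rw [(hMind.subset (subset_insert x J)).notMem_closure_iff_of_notMem hxJ
        (by rw [hME]; exact mem_univ x)]
      exact hMind
    exact this hx
  have hflat : ∀ X : Set α, M.IsFlat (M.closure X) := by
    intro X
    rw [Matroid.closure_def, sInter_eq_iInter]
    have hne : Nonempty {F // F ∈ {F | M.IsFlat F ∧ X ∩ M.E ⊆ F}} :=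
      ⟨⟨M.E, M.ground_isFlat, inter_subset_right⟩⟩
    exact Matroid.IsFlat.iInter fun F => F.2.1
  refine ⟨fun i => M.closure (I i), fun i => hflat _, ?_, ?_, ?_⟩
  · -- strict monotonicity
    have hmono : ∀ i j, i ≤ j → M.closure (I i) ⊆ M.closure (I j) :=
      fun i j hij => M.closure_subset_closure (hImono i j hij)
    have hcard : ∀ i, (I i).ncard = k i := by
      intro i
      rw [← hF'rk i, matRank_eq_of_basis (hIbasis i)]
    have hrkM : ∀ i, matRank M (M.closure (I i)) = k i := by
      intro i
      rw [matRank_eq_of_basis (hindep _ (hIbasis i).indep).isBasis_closure, hcard]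
    intro i j hij
    refine lt_of_le_of_ne (hmono i j hij.le) (fun h => ?_)
    have : k i = k j := by rw [← hrkM i, ← hrkM j]; exact congrArg (matRank M) h
    exact absurd this (hk hij).ne
  · intro i
    rw [matRank_eq_of_basis (hindep _ (hIbasis i).indep).isBasis_closure, ← hF'rk i,
      matRank_eq_of_basis (hIbasis i)]
  · intro i
    have h1 : M'.closure (I i) = F' i := by
      rw [(hIbasis i).closure_eq_closure, (hF'flat i).closure]
    refine subset_antisymm ?_ ?_
    · have : M.closure (I i) ⊆ M'.closure (I i) := hclsub _ (hIbasis i).indep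
      calc M'.closure (M.closure (I i)) ⊆ M'.closure (M'.closure (I i)) :=
            M'.closure_subset_closure this
        _ = F' i := by rw [M'.closure_closure, h1]
    · rw [← h1]
      exact M'.closure_subset_closure (M.subset_closure (I i) (by rw [hME]; exact subset_univ _))
end
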